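/- Fix positive conductances (C_k)_{k≥0} assigned by age. Then there exists a constant C₀ < ∞, independent of n, such that CAP(A) ≤ C₀·|A| for every n ≥ 1 and every A ⊆ 𝕃₀⁽ⁿ⁾. Consequently, for the sequence of clustering functions Φ_n = CAP on 𝕃₀⁽ⁿ⁾, there is no wetting transition: J* = −∞, i.e. the free energy ζ(J) = lim_n 2^{−n} ln ∑_{A ⊆ 𝕃₀⁽ⁿ⁾} e^{J|A| − CAP(A)} is strictly positive for every J ∈ ℝ. -/

import Mathlib

open Filter
open scoped Classical

noncomputable section

namespace PWC

/-- Leaves of the binary tree `𝕋⁽ⁿ⁾` of depth `n`: binary words of length `n`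
(coordinate `0` is the first step away from the root). -/
abbrev Leaf (n : ℕ) := Fin n → Bool

/-- The age (distance from the leaves) of the youngest common ancestor `u ∧ v` of two
leaves: `n` minus the length of their longest common prefix. -/
def meetAge {n : ℕ} (u v : Leaf n) : ℕ :=
  if u = v then 0 else n - sInf {i : ℕ | ∃ h : i < n, u ⟨i, h⟩ ≠ v ⟨i, h⟩}

/-- Canonical representative (as a leaf) of the ancestor of `u` at age `k`:
keep the first `n - k` coordinates and pad by `false`. -/
def trunc {n : ℕ} (k : ℕ) (u : Leaf n) : Leaf n :=
  fun i => if (i : ℕ) < n - k then u i else false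

/-- The branching points `ℬ(A) ∩ 𝕃_k` of `A` of age `k`, encoded by the canonical
representatives of the corresponding ancestors. -/
def branchPts {n : ℕ} (A : Finset (Leaf n)) (k : ℕ) : Finset (Leaf n) :=
  ((A ×ˢ A).filter (fun p => meetAge p.1 p.2 = k)).image (fun p => trunc k p.1)

/-- `b_k(A)`: the number of branching points of `A` of age `k`. -/
def bcount {n : ℕ} (A : Finset (Leaf n)) (k : ℕ) : ℕ := (branchPts A k).card

/-- `b_{k,ℓ}(A)`: the number of branching points of `A` of age `ℓ` whose direct
branching ancestor has age `k`; for `k = n+1` the indicator that the oldest branching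
point of `A` has age `ℓ` (i.e. the branching points at age `ℓ` having no strictly older
branching ancestor). -/
def b2count {n : ℕ} (A : Finset (Leaf n)) (k l : ℕ) : ℕ :=
  if k = n + 1 then
    ((branchPts A l).filter (fun w => ∀ j, l < j → j ≤ n → trunc j w ∉ branchPts A j)).card
  else
    ((branchPts A l).filter (fun w => trunc k w ∈ branchPts A k ∧
      ∀ j, l < j → j < k → trunc j w ∉ branchPts A j)).card

/-- `A ≺ B` : `A` is more clustered than `B`. -/
def MoreClustered {n : ℕ} (A B : Finset (Leaf n)) : Prop :=
  ∃ σ : Leaf n → Leaf n, Set.BijOn σ ↑A ↑B ∧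
    ∀ u ∈ A, ∀ v ∈ A, meetAge u v ≤ meetAge (σ u) (σ v)

/-- `A ∼ B` : the subtrees of `𝕋⁽ⁿ⁾` generated by `A` and `B` are graph-isomorphic,
i.e. there is a bijection of the leaf sets preserving all meet ages. -/
def EquivClustered {n : ℕ} (A B : Finset (Leaf n)) : Prop :=
  ∃ σ : Leaf n → Leaf n, Set.BijOn σ ↑A ↑B ∧
    ∀ u ∈ A, ∀ v ∈ A, meetAge (σ u) (σ v) = meetAge u v

/-- A clustering function: vanishes on `∅` and is invariant under isomorphism of the
generated subtrees. -/
def IsClusteringFn {n : ℕ} (Φ : Finset (Leaf n) → ℝ) : Prop :=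
  Φ ∅ = 0 ∧ ∀ A B : Finset (Leaf n), EquivClustered A B → Φ A = Φ B

/-- A monotone clustering function. -/
def IsMonotoneClusteringFn {n : ℕ} (Φ : Finset (Leaf n) → ℝ) : Prop :=
  IsClusteringFn Φ ∧
    (∀ A B : Finset (Leaf n), MoreClustered A B → Φ A ≤ Φ B) ∧
    (∀ A B : Finset (Leaf n), Disjoint A B → Φ (A ∪ B) ≤ Φ A + Φ B)

/-- The partition function `Z_n^{Φ,J}`. -/
def Z (n : ℕ) (Φ : Finset (Leaf n) → ℝ) (J : ℝ) : ℝ :=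
  ∑ A : Finset (Leaf n), Real.exp (J * (A.card : ℝ) - Φ A)

/-- The finite-volume free energy `ζ_n^Φ(J) = 2⁻ⁿ ln Z_n^{Φ,J}`. -/
def zetaN (n : ℕ) (Φ : Finset (Leaf n) → ℝ) (J : ℝ) : ℝ :=
  Real.log (Z n Φ J) / 2 ^ n

/-- The canonical partition function `W_n^Φ(a₀)`. -/
def W (n : ℕ) (Φ : Finset (Leaf n) → ℝ) (a₀ : ℕ) : ℝ :=
  ∑ A ∈ Finset.univ.filter (fun A : Finset (Leaf n) => A.card = a₀), Real.exp (-Φ A)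

/-- The finite-volume canonical free energy `ω_n^Φ(ε) = 2⁻ⁿ ln W_n^Φ(ε 2ⁿ)` (for a
dyadic `ε ∈ [0,1]` and `n` large, `⌊ε 2ⁿ⌋ = ε 2ⁿ`). -/
def omegaN (n : ℕ) (Φ : Finset (Leaf n) → ℝ) (ε : ℝ) : ℝ :=
  Real.log (W n Φ ⌊ε * 2 ^ n⌋₊) / 2 ^ n

/-- The expected density `ρ_n^Φ(J)` of the dry set under the PWC measure. -/
def rhoN (n : ℕ) (Φ : Finset (Leaf n) → ℝ) (J : ℝ) : ℝ :=
  (∑ A : Finset (Leaf n), (A.card : ℝ) * Real.exp (J * (A.card : ℝ) - Φ A)) /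
    (2 ^ n * Z n Φ J)

/-- A dyadic rational. -/
def IsDyadic (x : ℝ) : Prop := ∃ (k : ℤ) (m : ℕ), x = (k : ℝ) / 2 ^ m

/-- The hypotheses of the general theory (Proposition 1.2): each `Φ_n` (for `n ≥ 1`) is
a monotone, non-negative clustering function, and `Φ_n(A) ≤ Φ_{n-1}(A) + γ_n` for any
`A` contained in the leaf set of one of the two subtrees of `𝕋⁽ⁿ⁾` rooted at a child of
the root (identified with `𝕋⁽ⁿ⁻¹⁾` by prepending the corresponding letter), where
`γ_n ≥ 0` and `∑ γ_n 2⁻ⁿ < ∞`. -/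
structure GoodSeq (Φ : ∀ n, Finset (Fin n → Bool) → ℝ) (γ : ℕ → ℝ) : Prop where
  mono : ∀ n, 1 ≤ n → IsMonotoneClusteringFn (Φ n)
  nonneg : ∀ n, 1 ≤ n → ∀ A, 0 ≤ Φ n A
  gamma_nonneg : ∀ n, 0 ≤ γ n
  gamma_summable : Summable fun n => γ n / 2 ^ n
  subtree : ∀ (n : ℕ) (b : Bool) (A : Finset (Fin n → Bool)),
    Φ (n + 1) (A.image fun u => Fin.cons b u) ≤ Φ n A + γ (n + 1)

/-- The first order branching clustering function with parameters `(h_k)_{k=0}^n`, `h`. -/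
def foPhi (n : ℕ) (hs : ℕ → ℝ) (h : ℝ) (A : Finset (Leaf n)) : ℝ :=
  if A = ∅ then 0 else (∑ k ∈ Finset.range (n + 1), hs k * (bcount A k : ℝ)) + h

/-- The second order branching clustering function with parameters
`(h_{k,ℓ})_{0 ≤ ℓ < k ≤ n+1}`, `h`. -/
def soPhi (n : ℕ) (H : ℕ → ℕ → ℝ) (h : ℝ) (A : Finset (Leaf n)) : ℝ :=
  if A = ∅ then 0
  else (∑ k ∈ Finset.range (n + 2), ∑ l ∈ Finset.range k, H k l * (b2count A k l : ℝ)) + h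

/-- A non-decreasing (infinite) triangular array. -/
def ArrayMono (H : ℕ → ℕ → ℝ) : Prop :=
  ∀ k k' l l' : ℕ, l < k → l' < k' → k ≤ k' → l ≤ l' → H k l ≤ H k' l'

/-- The Dirichlet energy on `𝕋⁽ⁿ⁾` of `f` (vertices encoded as words of length `≤ n`,
read from the root; a vertex of length `m` has age `n - m` and its parent edge has
conductance `C (n - m)`). -/
def energy (n : ℕ) (C : ℕ → ℝ) (f : List Bool → ℝ) : ℝ :=
  ∑ m ∈ Finset.Icc 1 n, ∑ v : Fin m → Bool,
    C (n - m) * (f (List.ofFn v) - f (List.ofFn v).dropLast) ^ 2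

/-- The capacity of a set of leaves `A ⊆ 𝕃₀⁽ⁿ⁾`. -/
def cap (n : ℕ) (C : ℕ → ℝ) (A : Finset (Leaf n)) : ℝ :=
  sInf {x : ℝ | ∃ f : List Bool → ℝ, f [] = 1 ∧ (∀ u ∈ A, f (List.ofFn u) = 0) ∧
    x = energy n C f}

/-!
Testing the capacity with the potential that vanishes exactly on `A` and equals `1` elsewhere
charges only the `|A|` leaf edges, so `CAP(A) ≤ C₀|A|` with `C₀ = C 0`. Hence
`Z_n ≥ ∑_A e^{(J - C₀)|A|} = (1 + e^{J - C₀})^{2ⁿ}`, i.e. `ζ_n(J) ≥ ln(1 + e^{J - C₀}) > 0`.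
The limit exists because gluing potentials on the two subtrees below the root gives
`CAP_{n+1}(A₀ ⊔ A₁) ≤ CAP_n(A₀) + CAP_n(A₁)`, so `Z_{n+1} ≥ Z_n²` and `ζ_n` is nondecreasing;
it is bounded by `ln(1 + e^J)` because `CAP ≥ 0`.
-/

def admissibleEnergies (n : ℕ) (C : ℕ → ℝ) (A : Finset (Leaf n)) : Set ℝ :=
  {x : ℝ | ∃ f : List Bool → ℝ, f [] = 1 ∧ (∀ u ∈ A, f (List.ofFn u) = 0) ∧
    x = energy n C f}

section Capacity

variable {n : ℕ} {C : ℕ → ℝ}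

lemma cap_eq_sInf (A : Finset (Leaf n)) : cap n C A = sInf (admissibleEnergies n C A) := rfl

lemma energy_nonneg (hC : ∀ k, 0 ≤ C k) (f : List Bool → ℝ) : 0 ≤ energy n C f :=
  Finset.sum_nonneg fun _ _ => Finset.sum_nonneg fun _ _ => mul_nonneg (hC _) (sq_nonneg _)

lemma bddBelow_admissibleEnergies (hC : ∀ k, 0 ≤ C k) (A : Finset (Leaf n)) :
    BddBelow (admissibleEnergies n C A) := by
  refine ⟨0, ?_⟩
  rintro x ⟨f, -, -, rfl⟩
  exact energy_nonneg hC f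

lemma cap_nonneg (hC : ∀ k, 0 ≤ C k) (A : Finset (Leaf n)) : 0 ≤ cap n C A := by
  apply Real.sInf_nonneg
  rintro x ⟨f, -, -, rfl⟩
  exact energy_nonneg hC f

lemma cap_le_energy (hC : ∀ k, 0 ≤ C k) {A : Finset (Leaf n)} {f : List Bool → ℝ}
    (h_root : f [] = 1) (h_leaves : ∀ u ∈ A, f (List.ofFn u) = 0) :
    cap n C A ≤ energy n C f :=
  csInf_le (bddBelow_admissibleEnergies hC A) ⟨f, h_root, h_leaves, rfl⟩

def oneSubIndicator (A : Finset (Leaf n)) (w : List Bool) : ℝ :=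
  if ∃ u ∈ A, w = List.ofFn u then 0 else 1

lemma oneSubIndicator_of_length_ne (A : Finset (Leaf n)) {w : List Bool} (h : w.length ≠ n) :
    oneSubIndicator A w = 1 := by
  rw [oneSubIndicator, if_neg]
  rintro ⟨u, -, rfl⟩
  simp at h

lemma oneSubIndicator_ofFn (A : Finset (Leaf n)) (v : Leaf n) :
    oneSubIndicator A (List.ofFn v) = if v ∈ A then 0 else 1 := by
  simp [oneSubIndicator, List.ofFn_inj]

lemma energy_oneSubIndicator (hn : 1 ≤ n) (A : Finset (Leaf n)) :
    energy n C (oneSubIndicator A) = C 0 * A.card := by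
  rw [energy, Finset.sum_eq_single_of_mem n (Finset.mem_Icc.2 ⟨hn, le_rfl⟩)]
  · have hparent (v : Leaf n) : oneSubIndicator A (List.ofFn v).dropLast = 1 :=
      oneSubIndicator_of_length_ne A (by simp; omega)
    simp only [hparent, oneSubIndicator_ofFn, Nat.sub_self]
    rw [← Finset.mul_sum]
    congr 1
    simp [apply_ite (fun x : ℝ => (x - 1) ^ 2)]
  · intro m hm hmn
    refine Finset.sum_eq_zero fun v _ => ?_
    rw [oneSubIndicator_of_length_ne A (by simpa using hmn),
      oneSubIndicator_of_length_ne A (by simp at hm ⊢; omega)]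
    simp

lemma oneSubIndicator_mem_admissibleEnergies (hn : 1 ≤ n) (A : Finset (Leaf n)) :
    C 0 * A.card ∈ admissibleEnergies n C A := by
  refine ⟨oneSubIndicator A, oneSubIndicator_of_length_ne A (by simp; omega), ?_,
    (energy_oneSubIndicator hn A).symm⟩
  intro u hu
  rw [oneSubIndicator, if_pos ⟨u, hu, rfl⟩]

lemma cap_le_mul_card (hC : ∀ k, 0 ≤ C k) (hn : 1 ≤ n) (A : Finset (Leaf n)) :
    cap n C A ≤ C 0 * A.card :=
  csInf_le (bddBelow_admissibleEnergies hC A) (oneSubIndicator_mem_admissibleEnergies hn A)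

end Capacity

section Gluing

variable {n : ℕ} {C : ℕ → ℝ}

def glue (f₀ f₁ : List Bool → ℝ) : List Bool → ℝ
  | [] => 1
  | b :: w => if b then f₁ w else f₀ w

def graft (B₀ B₁ : Finset (Leaf n)) : Finset (Leaf (n + 1)) :=
  B₀.image (Fin.cons false) ∪ B₁.image (Fin.cons true)

lemma cons_mem_graft (B₀ B₁ : Finset (Leaf n)) (b : Bool) (w : Leaf n) :
    Fin.cons b w ∈ graft B₀ B₁ ↔ w ∈ if b then B₁ else B₀ := by
  cases b <;> simp [graft, Fin.cons_inj]

lemma graft_injective :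
    Function.Injective fun B : Finset (Leaf n) × Finset (Leaf n) => graft B.1 B.2 := by
  intro B B' (h : graft B.1 B.2 = graft B'.1 B'.2)
  have hmem (b : Bool) (w : Leaf n) :
      w ∈ (if b then B.2 else B.1) ↔ w ∈ if b then B'.2 else B'.1 := by
    rw [← cons_mem_graft, ← cons_mem_graft, h]
  exact Prod.ext (Finset.ext (hmem false)) (Finset.ext (hmem true))

lemma card_graft (B₀ B₁ : Finset (Leaf n)) : (graft B₀ B₁).card = B₀.card + B₁.card := by
  rw [graft, Finset.card_union_of_disjoint,
    Finset.card_image_of_injective _ (Fin.cons_right_injective _),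
    Finset.card_image_of_injective _ (Fin.cons_right_injective _)]
  simp [Finset.disjoint_left, Fin.cons_inj]

lemma sum_fun_fin_succ {α M : Type*} [Fintype α] [AddCommMonoid M] {m : ℕ}
    (F : (Fin (m + 1) → α) → M) :
    ∑ v, F v = ∑ a, ∑ w : Fin m → α, F (Fin.cons a w) := by
  rw [← Fintype.sum_prod_type']
  exact (Fintype.sum_equiv (Fin.consEquiv _) _ _ fun _ => rfl).symm

lemma energy_glue {f₀ f₁ : List Bool → ℝ} (h₀ : f₀ [] = 1) (h₁ : f₁ [] = 1) :
    energy (n + 1) C (glue f₀ f₁) = energy n C f₀ + energy n C f₁ := by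
  have h_root : ∑ v : Fin 1 → Bool, C (n + 1 - 1) *
      (glue f₀ f₁ (List.ofFn v) - glue f₀ f₁ (List.ofFn v).dropLast) ^ 2 = 0 := by
    -- `glue f₀ f₁` equals `1` at the root and at both of its children
    refine Finset.sum_eq_zero fun v _ => ?_
    cases h : v 0 <;> simp [List.ofFn_succ, glue, h, h₀, h₁]
  have h_level {m : ℕ} (hm : 1 ≤ m) (b : Bool) (w : Fin m → Bool) :
      C (n + 1 - (m + 1)) * (glue f₀ f₁ (List.ofFn (Fin.cons b w)) -
        glue f₀ f₁ (List.ofFn (Fin.cons b w)).dropLast) ^ 2 =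
      C (n - m) * ((if b then f₁ else f₀) (List.ofFn w) -
        (if b then f₁ else f₀) (List.ofFn w).dropLast) ^ 2 := by
    have hw : List.ofFn w ≠ [] := by simp; omega
    rw [List.ofFn_cons, List.dropLast_cons_of_ne_nil hw, Nat.add_sub_add_right]
    cases b <;> rfl
  rw [energy, energy, energy, ← Finset.Ico_add_one_right_eq_Icc,
    Finset.sum_eq_sum_Ico_succ_bot (by omega), h_root, zero_add,
    ← Finset.sum_Ico_add', ← Finset.sum_add_distrib]
  refine Finset.sum_congr rfl fun m hm => ?_
  rw [sum_fun_fin_succ, Fintype.sum_bool]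
  simp only [h_level (Finset.mem_Ico.1 hm).1, if_true, Bool.false_eq_true, if_false, add_comm]

lemma cap_graft_le (hC : ∀ k, 0 ≤ C k) (hn : 1 ≤ n) (B₀ B₁ : Finset (Leaf n)) :
    cap (n + 1) C (graft B₀ B₁) ≤ cap n C B₀ + cap n C B₁ := by
  have hne₀ := Set.nonempty_of_mem (oneSubIndicator_mem_admissibleEnergies (C := C) hn B₀)
  have hne₁ := Set.nonempty_of_mem (oneSubIndicator_mem_admissibleEnergies (C := C) hn B₁)
  rw [cap_eq_sInf B₀, cap_eq_sInf B₁, ← csInf_add hne₀ (bddBelow_admissibleEnergies hC B₀) hne₁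
    (bddBelow_admissibleEnergies hC B₁)]
  refine le_csInf (hne₀.add hne₁) ?_
  rintro _ ⟨_, ⟨f₀, hf₀, hA₀, rfl⟩, _, ⟨f₁, hf₁, hA₁, rfl⟩, rfl⟩
  change _ ≤ energy n C f₀ + energy n C f₁
  rw [← energy_glue hf₀ hf₁]
  refine cap_le_energy hC rfl fun u hu => ?_
  induction u using Fin.consCases with
  | cons b w =>
    rw [cons_mem_graft] at hu
    rw [List.ofFn_cons]
    cases b <;> simp_all [glue]

end Gluing

section FreeEnergy

variable {n : ℕ} {J : ℝ}

lemma Z_pos (Φ : Finset (Leaf n) → ℝ) (J : ℝ) : 0 < Z n Φ J :=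
  Finset.sum_pos (fun _ _ => Real.exp_pos _) Finset.univ_nonempty

lemma Z_le_Z_of_le {Φ Ψ : Finset (Leaf n) → ℝ} (h : ∀ A, Φ A ≤ Ψ A) : Z n Ψ J ≤ Z n Φ J :=
  Finset.sum_le_sum fun A _ => Real.exp_le_exp.2 (by linarith [h A])

lemma Z_mul_card (a : ℝ) : Z n (fun A => a * A.card) J = (1 + Real.exp (J - a)) ^ 2 ^ n := by
  have h := Fintype.sum_pow_mul_eq_add_pow (Leaf n) (Real.exp (J - a)) 1
  simp only [one_pow, mul_one, Fintype.card_fun, Fintype.card_bool, Fintype.card_fin] at h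
  rw [Z, add_comm, ← h]
  refine Finset.sum_congr rfl fun A _ => ?_
  rw [← Real.exp_nat_mul, ← sub_mul, mul_comm]

lemma zetaN_mul_card (a : ℝ) :
    zetaN n (fun A => a * A.card) J = Real.log (1 + Real.exp (J - a)) := by
  rw [zetaN, Z_mul_card, Real.log_pow]
  field_simp
  push_cast
  ring

lemma zetaN_le_zetaN_of_le {Φ Ψ : Finset (Leaf n) → ℝ} (h : ∀ A, Φ A ≤ Ψ A) :
    zetaN n Ψ J ≤ zetaN n Φ J :=
  div_le_div_of_nonneg_right (Real.log_le_log (Z_pos Ψ J) (Z_le_Z_of_le h)) (by positivity)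

lemma Z_sq_le_Z_succ {Φ : Finset (Leaf n) → ℝ} {Ψ : Finset (Leaf (n + 1)) → ℝ}
    (h : ∀ B₀ B₁, Ψ (graft B₀ B₁) ≤ Φ B₀ + Φ B₁) : Z n Φ J ^ 2 ≤ Z (n + 1) Ψ J := by
  calc Z n Φ J ^ 2
      = ∑ B : Finset (Leaf n) × Finset (Leaf n),
          Real.exp (J * B.1.card - Φ B.1) * Real.exp (J * B.2.card - Φ B.2) := by
        rw [sq, Z, Fintype.sum_mul_sum, Fintype.sum_prod_type]
    _ ≤ ∑ B : Finset (Leaf n) × Finset (Leaf n),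
          Real.exp (J * (graft B.1 B.2).card - Ψ (graft B.1 B.2)) := by
        refine Finset.sum_le_sum fun B _ => ?_
        rw [← Real.exp_add, Real.exp_le_exp, card_graft]
        push_cast
        linarith [h B.1 B.2]
    _ = ∑ A ∈ Finset.univ.image (fun B : Finset (Leaf n) × Finset (Leaf n) => graft B.1 B.2),
          Real.exp (J * A.card - Ψ A) := by
        rw [Finset.sum_image fun _ _ _ _ h => graft_injective h]
    _ ≤ Z (n + 1) Ψ J :=
        Finset.sum_le_sum_of_subset_of_nonneg (Finset.subset_univ _)
          fun _ _ _ => (Real.exp_pos _).le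

lemma zetaN_le_zetaN_succ {Φ : Finset (Leaf n) → ℝ} {Ψ : Finset (Leaf (n + 1)) → ℝ}
    (h : ∀ B₀ B₁, Ψ (graft B₀ B₁) ≤ Φ B₀ + Φ B₁) : zetaN n Φ J ≤ zetaN (n + 1) Ψ J := by
  have hlog := Real.log_le_log (pow_pos (Z_pos Φ J) 2) (Z_sq_le_Z_succ h)
  rw [Real.log_pow] at hlog
  rw [zetaN, zetaN, div_le_div_iff₀ (by positivity) (by positivity), pow_succ]
  push_cast at hlog
  nlinarith [pow_pos (two_pos (α := ℝ)) n]

end FreeEnergy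

lemma tendsto_zetaN_cap {C : ℕ → ℝ} (hC : ∀ k, 0 ≤ C k) (J : ℝ) :
    Tendsto (fun n => zetaN n (cap n C) J) atTop
      (nhds (⨆ n, zetaN (n + 1) (cap (n + 1) C) J)) := by
  have hmono : Monotone fun n => zetaN (n + 1) (cap (n + 1) C) J :=
    monotone_nat_of_le_succ fun n => zetaN_le_zetaN_succ (cap_graft_le hC (by omega))
  have hbdd : BddAbove (Set.range fun n => zetaN (n + 1) (cap (n + 1) C) J) := by
    refine ⟨Real.log (1 + Real.exp J), ?_⟩
    rintro _ ⟨n, rfl⟩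
    calc zetaN (n + 1) (cap (n + 1) C) J
        ≤ zetaN (n + 1) (fun A => 0 * A.card) J :=
          zetaN_le_zetaN_of_le fun A => by simpa using cap_nonneg hC A
      _ = Real.log (1 + Real.exp J) := by rw [zetaN_mul_card, sub_zero]
  exact (tendsto_add_atTop_iff_nat 1).1 (tendsto_atTop_ciSup hmono hbdd)

/-- Proposition 1.23: for positive conductances assigned by age,
there is `C₀ < ∞` independent of `n` with `CAP(A) ≤ C₀|A|` for all `n ≥ 1` and
`A ⊆ 𝕃₀⁽ⁿ⁾`; consequently for `Φ_n = CAP` there is no wetting transition: the free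
energy `ζ(J)` exists and is strictly positive for every `J ∈ ℝ` (`J* = -∞`). -/
theorem stmt19 (C : ℕ → ℝ) (hC : ∀ k, 0 < C k) :
    ∃ C₀ : ℝ,
      (∀ n : ℕ, 1 ≤ n → ∀ A : Finset (Leaf n), cap n C A ≤ C₀ * (A.card : ℝ)) ∧
      ∃ ζ : ℝ → ℝ,
        (∀ J : ℝ, Tendsto (fun n => zetaN n (cap n C) J) atTop (nhds (ζ J))) ∧
        ∀ J : ℝ, 0 < ζ J := by
  have hC' : ∀ k, 0 ≤ C k := fun k => (hC k).le
  refine ⟨C 0, fun n hn => cap_le_mul_card hC' hn, _, tendsto_zetaN_cap hC', fun J => ?_⟩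
  have h_lower (n : ℕ) (hn : 1 ≤ n) :
      Real.log (1 + Real.exp (J - C 0)) ≤ zetaN n (cap n C) J := by
    rw [← zetaN_mul_card]
    exact zetaN_le_zetaN_of_le (cap_le_mul_card hC' hn)
  exact (Real.log_pos (lt_add_of_pos_right 1 (Real.exp_pos _))).trans_le
    (ge_of_tendsto (tendsto_zetaN_cap hC' J) (eventually_atTop.2 ⟨1, h_lower⟩))

end PWC
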